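/- arXiv:1110.1105 — 6 statements merged into one kernel-verified Lean document; each statement's English description precedes it below -/
import Mathlib

section
/- Let α > 0 and let f : ℝ → ℝ be a function. There exists an α-Lipschitz function g : ℝ → ℝ with g ≤ f pointwise if and only if f is bounded below on compact intervals, liminf_{t → -∞} (f(t) - α t) > -∞, and liminf_{t → +∞} (f(t) + α t) > -∞. -/
/-! An `α`-Lipschitz minorant `g` of `f` forces `g 0 - α |t| ≤ f t`, i.e. `f + α |·|` is bounded
below; conversely, if it is, the infimal convolution `x ↦ ⨅ y, f y + α |x - y|` is finite, lies
below `f`, and is `α`-Lipschitz by the triangle inequality. Boundedness below of `f + α |·|`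
splits into boundedness below of `f` on compact intervals and of `f ∓ α t` near `∓∞`, which are
the three conditions in the statement. -/

open Filter Set

/-- A function `g : ℝ → ℝ` is `α`-Lipschitz if `|g s - g t| ≤ α * |s - t|` for all `s, t`. -/
def IsAlphaLipschitz (α : ℝ) (g : ℝ → ℝ) : Prop :=
  ∀ s t : ℝ, |g s - g t| ≤ α * |s - t|

theorem bot_lt_liminf_coe_iff {ι : Type*} {l : Filter ι} {u : ι → ℝ} :
    ⊥ < liminf (fun t => (u t : EReal)) l ↔ ∃ c : ℝ, ∀ᶠ t in l, c ≤ u t := by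
  constructor
  · intro h
    obtain ⟨x, hx_bot, hx_lt⟩ := exists_between h
    lift x to ℝ using ⟨(hx_lt.trans_le le_top).ne, hx_bot.ne'⟩ with c
    exact ⟨c, (eventually_lt_of_lt_liminf hx_lt).mono fun t ht => mod_cast ht.le⟩
  · rintro ⟨c, hc⟩
    exact (EReal.bot_lt_coe c).trans_le (le_liminf_of_le (by isBoundedDefault) (hc.mono fun t ht => mod_cast ht))

section LipschitzEnvelope

variable {X : Type*} [PseudoMetricSpace X] {α : ℝ} {f : X → ℝ}

/-- The largest `α`-Lipschitz minorant of `f`, when `f` has any. -/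
noncomputable def lipschitzEnvelope (α : ℝ) (f : X → ℝ) (x : X) : ℝ :=
  ⨅ y, f y + α * dist x y

theorem bddBelow_range_add_mul_dist (hα : 0 ≤ α) {x₀ : X}
    (h : BddBelow (range fun y => f y + α * dist x₀ y)) (x : X) :
    BddBelow (range fun y => f y + α * dist x y) := by
  obtain ⟨C, hC⟩ := h
  refine ⟨C - α * dist x₀ x, ?_⟩
  rintro _ ⟨y, rfl⟩
  have h₀ : C ≤ f y + α * dist x₀ y := hC ⟨y, rfl⟩
  have : α * dist x₀ y ≤ α * dist x₀ x + α * dist x y := by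
    rw [← mul_add]
    exact mul_le_mul_of_nonneg_left (dist_triangle _ _ _) hα
  dsimp only
  linarith

variable (hα : 0 ≤ α) {x₀ : X} (h : BddBelow (range fun y => f y + α * dist x₀ y))
include hα h

theorem lipschitzEnvelope_le_add_mul_dist (x y : X) :
    lipschitzEnvelope α f x ≤ f y + α * dist x y :=
  ciInf_le (bddBelow_range_add_mul_dist hα h x) y

theorem lipschitzEnvelope_le (x : X) : lipschitzEnvelope α f x ≤ f x := by
  simpa using lipschitzEnvelope_le_add_mul_dist hα h x x

theorem lipschitzEnvelope_le_lipschitzEnvelope_add (x x' : X) :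
    lipschitzEnvelope α f x ≤ lipschitzEnvelope α f x' + α * dist x x' := by
  have : Nonempty X := ⟨x⟩
  rw [← sub_le_iff_le_add]
  refine le_ciInf fun y => ?_
  have : α * dist x y ≤ α * dist x x' + α * dist x' y := by
    rw [← mul_add]
    exact mul_le_mul_of_nonneg_left (dist_triangle _ _ _) hα
  linarith [lipschitzEnvelope_le_add_mul_dist hα h x y]

end LipschitzEnvelope

theorem isAlphaLipschitz_of_le_add {α : ℝ} {g : ℝ → ℝ}
    (h : ∀ s t, g s ≤ g t + α * |s - t|) : IsAlphaLipschitz α g := fun s t =>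
  abs_sub_le_iff.2 ⟨by linarith [h s t], by linarith [abs_sub_comm s t ▸ h t s]⟩

theorem exists_isAlphaLipschitz_le_iff {α : ℝ} (hα : 0 ≤ α) {f : ℝ → ℝ} :
    (∃ g : ℝ → ℝ, IsAlphaLipschitz α g ∧ ∀ t, g t ≤ f t) ↔
      BddBelow (range fun s => f s + α * |s|) := by
  constructor
  · rintro ⟨g, hg, hgf⟩
    refine ⟨g 0, ?_⟩
    rintro _ ⟨s, rfl⟩
    have := (abs_sub_le_iff.1 (hg 0 s)).1
    rw [zero_sub, abs_neg] at this
    linarith [hgf s]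
  · intro h
    have h₀ : BddBelow (range fun s => f s + α * dist 0 s) := by
      simpa only [Real.dist_eq, zero_sub, abs_neg] using h
    refine ⟨lipschitzEnvelope α f, isAlphaLipschitz_of_le_add fun s t => ?_,
      lipschitzEnvelope_le hα h₀⟩
    simpa only [Real.dist_eq] using lipschitzEnvelope_le_lipschitzEnvelope_add hα h₀ s t

theorem bddBelow_range_add_mul_abs_iff {α : ℝ} (hα : 0 ≤ α) {f : ℝ → ℝ} :
    BddBelow (range fun s => f s + α * |s|) ↔
      (∀ a b : ℝ, BddBelow (f '' Icc a b)) ∧ (∃ c : ℝ, ∀ᶠ t in atBot, c ≤ f t - α * t) ∧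
        ∃ c : ℝ, ∀ᶠ t in atTop, c ≤ f t + α * t := by
  constructor
  · rintro ⟨C, hC⟩
    have hC : ∀ s, C ≤ f s + α * |s| := fun s => hC ⟨s, rfl⟩
    refine ⟨fun a b => ⟨C - α * max |a| |b|, ?_⟩, ⟨C, ?_⟩, ⟨C, ?_⟩⟩
    · rintro _ ⟨s, hs, rfl⟩
      have := mul_le_mul_of_nonneg_left (abs_le_max_abs_abs hs.1 hs.2) hα
      linarith [hC s]
    · filter_upwards [eventually_le_atBot 0] with t ht
      linarith [abs_of_nonpos ht ▸ hC t]
    · filter_upwards [eventually_ge_atTop 0] with t ht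
      linarith [abs_of_nonneg ht ▸ hC t]
  · rintro ⟨hIcc, ⟨c₁, h₁⟩, ⟨c₂, h₂⟩⟩
    obtain ⟨A, hA⟩ := eventually_atBot.1 h₁
    obtain ⟨B, hB⟩ := eventually_atTop.1 h₂
    obtain ⟨m, hm⟩ := hIcc A B
    refine ⟨min c₁ (min c₂ m), ?_⟩
    rintro _ ⟨s, rfl⟩
    have hneg := mul_le_mul_of_nonneg_left (neg_abs_le s) hα
    have hpos := mul_le_mul_of_nonneg_left (le_abs_self s) hα
    dsimp only
    rcases le_or_gt s A with hsA | hAs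
    · linarith [hA s hsA, min_le_left c₁ (min c₂ m)]
    rcases le_or_gt B s with hBs | hsB
    · linarith [hB s hBs, min_le_left c₂ m, min_le_right c₁ (min c₂ m)]
    · linarith [hm ⟨s, ⟨hAs.le, hsB.le⟩, rfl⟩, min_le_right c₂ m, min_le_right c₁ (min c₂ m),
        mul_nonneg hα (abs_nonneg s)]

theorem exists_lipschitz_minorant_iff (α : ℝ) (hα : 0 < α) (f : ℝ → ℝ) :
    (∃ g : ℝ → ℝ, IsAlphaLipschitz α g ∧ ∀ t, g t ≤ f t) ↔
      ((∀ a b : ℝ, BddBelow (f '' Set.Icc a b)) ∧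
        Filter.liminf (fun t => ((f t - α * t : ℝ) : EReal)) Filter.atBot > ⊥ ∧
        Filter.liminf (fun t => ((f t + α * t : ℝ) : EReal)) Filter.atTop > ⊥) := by
  rw [exists_isAlphaLipschitz_le_iff hα.le, bddBelow_range_add_mul_abs_iff hα.le, gt_iff_lt,
    gt_iff_lt, bot_lt_liminf_coe_iff, bot_lt_liminf_coe_iff]
end

section
/- Let α > 0 and let f : ℝ → ℝ admit an α-Lipschitz minorant m. Define f←(t) := f(t) for t < 0 and f←(t) := m(0) - α t for t ≥ 0, and let m← be the α-Lipschitz minorant of f←. Then m←(t) = m(t) for all t ≤ 0. -/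
open Filter Set

/-- `m` is the `α`-Lipschitz minorant of `f`: the greatest `α`-Lipschitz function
dominated by `f`. -/
def IsLipMinorant (α : ℝ) (f m : ℝ → ℝ) : Prop :=
  IsAlphaLipschitz α m ∧ (∀ t, m t ≤ f t) ∧
    ∀ g : ℝ → ℝ, IsAlphaLipschitz α g → (∀ t, g t ≤ f t) → ∀ t, g t ≤ m t

/-!
Both `m` and `m←` agree on `(-∞, 0]` with their truncations `t ↦ min (g t) (g 0 - α t)` by the
cone `g 0 - α t`, and these truncations lie below the other function's obstacle: on `t < 0` the
obstacles coincide, and on `t ≥ 0` the cone of `m` is `f←` itself while the cone of `m←` lies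
below that of `m` (as `m← 0 ≤ f← 0 = m 0`), which lies below `m ≤ f`. Maximality of each
minorant then gives the two inequalities.
-/

def truncLeft (α : ℝ) (g : ℝ → ℝ) (t : ℝ) : ℝ :=
  min (g t) (g 0 - α * t)

namespace IsAlphaLipschitz

variable {α : ℝ} {g : ℝ → ℝ}

theorem sub_le (hg : IsAlphaLipschitz α g) (s t : ℝ) : g s - α * |s - t| ≤ g t := by
  linarith [(abs_le.mp (hg s t)).2]

theorem le_sub_mul_of_nonpos (hg : IsAlphaLipschitz α g) {t : ℝ} (ht : t ≤ 0) :
    g t ≤ g 0 - α * t := by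
  have := hg.sub_le t 0
  rw [sub_zero, abs_of_nonpos ht] at this
  linarith

theorem sub_mul_le_of_nonneg (hg : IsAlphaLipschitz α g) {t : ℝ} (ht : 0 ≤ t) :
    g 0 - α * t ≤ g t := by
  have := hg.sub_le 0 t
  rwa [zero_sub, abs_neg, abs_of_nonneg ht] at this

theorem min (hg : IsAlphaLipschitz α g) {h : ℝ → ℝ} (hh : IsAlphaLipschitz α h) :
    IsAlphaLipschitz α fun t => min (g t) (h t) := fun s t =>
  (abs_min_sub_min_le_max _ _ _ _).trans (max_le (hg s t) (hh s t))

theorem const_sub_mul (hα : 0 ≤ α) (c : ℝ) : IsAlphaLipschitz α fun t => c - α * t := by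
  intro s t
  rw [show c - α * s - (c - α * t) = α * (t - s) by ring, abs_mul, abs_of_nonneg hα,
    abs_sub_comm]

theorem truncLeft (hα : 0 ≤ α) (hg : IsAlphaLipschitz α g) :
    IsAlphaLipschitz α (truncLeft α g) :=
  hg.min (const_sub_mul hα _)

theorem truncLeft_eq_of_nonpos (hg : IsAlphaLipschitz α g) {t : ℝ} (ht : t ≤ 0) :
    _root_.truncLeft α g t = g t :=
  min_eq_left (hg.le_sub_mul_of_nonpos ht)

end IsAlphaLipschitz

theorem IsLipMinorant.le_of_truncLeft_le {α : ℝ} (hα : 0 ≤ α) {f m g : ℝ → ℝ}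
    (hm : IsLipMinorant α f m) (hg : IsAlphaLipschitz α g) (hgf : ∀ s, truncLeft α g s ≤ f s)
    {t : ℝ} (ht : t ≤ 0) : g t ≤ m t := by
  rw [← hg.truncLeft_eq_of_nonpos ht]
  exact hm.2.2 _ (hg.truncLeft hα) hgf t

theorem minorant_left_splice (α : ℝ) (hα : 0 < α) (f m mleft : ℝ → ℝ)
    (hm : IsLipMinorant α f m)
    (hml : IsLipMinorant α (fun t => if t < 0 then f t else m 0 - α * t) mleft) :
    ∀ t ≤ (0 : ℝ), mleft t = m t := by
  obtain ⟨hmLip, hmf, -⟩ := id hm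
  obtain ⟨hlLip, hlf, -⟩ := id hml
  have hl0 : mleft 0 ≤ m 0 := by simpa using hlf 0
  have trunc_mleft_le_f : ∀ s, truncLeft α mleft s ≤ f s := by
    intro s
    rcases lt_or_ge s 0 with hs | hs
    · exact (min_le_left _ _).trans (by simpa [hs] using hlf s)
    · calc truncLeft α mleft s ≤ mleft 0 - α * s := min_le_right _ _
        _ ≤ m 0 - α * s := by linarith
        _ ≤ m s := hmLip.sub_mul_le_of_nonneg hs
        _ ≤ f s := hmf s
  have trunc_m_le_splice : ∀ s, truncLeft α m s ≤ if s < 0 then f s else m 0 - α * s := by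
    intro s
    split_ifs
    · exact (min_le_left _ _).trans (hmf s)
    · exact min_le_right _ _
  intro t ht
  exact le_antisymm (hm.le_of_truncLeft_le hα.le hlLip trunc_mleft_le_f ht)
    (hml.le_of_truncLeft_le hα.le hmLip trunc_m_le_splice ht)
end

section
/- Let α > 0, let f : ℝ → ℝ be a càdlàg function (right-continuous with left limits) admitting an α-Lipschitz minorant m. Then the contact set {t ∈ ℝ : m(t) = f(t) ∧ f(t⁻)} is closed, where f(t⁻) denotes the left limit of f at t. -/
open Filter Set Topology

/-!
The minorant `m` is continuous and lies below `g := min f f(·⁻)` (below `f(t⁻)` by passing to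
the limit in `m ≤ f`), so the contact set is `{t | g t ≤ m t}`. It is closed because `g` is
lower semicontinuous: the left-limit function of a càdlàg `f` tends to `f(t⁻)` from the left of
`t` and to `f(t)` from the right, so `g` tends to `f(t⁻) ≥ g t` and to `f(t) ≥ g t` on the two
sides.
-/

theorem IsAlphaLipschitz.continuous {α : ℝ} {g : ℝ → ℝ} (hg : IsAlphaLipschitz α g) :
    Continuous g :=
  (LipschitzWith.of_dist_le' (K := α) fun s t => by
    simpa only [Real.dist_eq] using hg s t).continuous

/-- Typically `L x = 𝓝[<] x`, so that `fL` is the left-limit function of `f`. -/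
theorem tendsto_nhdsWithin_of_pointwise_limits {X Y : Type*} [TopologicalSpace X]
    [TopologicalSpace Y] [RegularSpace Y] {L : X → Filter X} [∀ x, (L x).NeBot]
    (hL : ∀ x, L x ≤ 𝓝 x) {f fL : X → Y} (hfL : ∀ x, Tendsto f (L x) (𝓝 (fL x)))
    {W : Set X} (hW : IsOpen W) {x : X} {y : Y} (hf : Tendsto f (𝓝[W] x) (𝓝 y)) :
    Tendsto fL (𝓝[W] x) (𝓝 y) := by
  refine (closed_nhds_basis y).tendsto_right_iff.2 fun V ⟨hVy, hV⟩ => ?_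
  filter_upwards [eventually_mem_nhdsWithin_iff.2 (hf hVy), self_mem_nhdsWithin] with z hz hzW
  rw [hW.nhdsWithin_eq hzW] at hz
  exact hV.mem_of_tendsto (hfL z) (hL z hz)

theorem lowerSemicontinuousAt_of_tendsto_nhdsLT_nhdsGT {α β : Type*} [TopologicalSpace α]
    [LinearOrder α] [TopologicalSpace β] [LinearOrder β] [OrderClosedTopology β]
    {g : α → β} {t : α} {a b : β} (hlt : Tendsto g (𝓝[<] t) (𝓝 a))
    (hgt : Tendsto g (𝓝[>] t) (𝓝 b)) (ha : g t ≤ a) (hb : g t ≤ b) :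
    LowerSemicontinuousAt g t := by
  intro y hy
  rw [← nhdsNE_sup_pure, ← nhdsLT_sup_nhdsGT]
  exact ⟨⟨hlt.eventually_const_lt (hy.trans_le ha), hgt.eventually_const_lt (hy.trans_le hb)⟩,
    hy⟩

section Cadlag

variable {f fl : ℝ → ℝ} (hll : ∀ t, Tendsto f (𝓝[<] t) (𝓝 (fl t)))
include hll

theorem tendsto_leftLim_nhdsLT (t : ℝ) : Tendsto fl (𝓝[<] t) (𝓝 (fl t)) :=
  tendsto_nhdsWithin_of_pointwise_limits (fun _ => nhdsWithin_le_nhds) hll isOpen_Iio (hll t)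

theorem tendsto_leftLim_nhdsGT (hrc : ∀ t, ContinuousWithinAt f (Ici t) t) (t : ℝ) :
    Tendsto fl (𝓝[>] t) (𝓝 (f t)) :=
  tendsto_nhdsWithin_of_pointwise_limits (fun _ => nhdsWithin_le_nhds) hll isOpen_Ioi
    ((hrc t).mono Ioi_subset_Ici_self)

theorem lowerSemicontinuous_min_leftLim (hrc : ∀ t, ContinuousWithinAt f (Ici t) t) :
    LowerSemicontinuous fun t => min (f t) (fl t) := fun t =>
  lowerSemicontinuousAt_of_tendsto_nhdsLT_nhdsGT
    (by simpa only [min_self] using (hll t).min (tendsto_leftLim_nhdsLT hll t))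
    (by simpa only [min_self] using
      ((hrc t).mono Ioi_subset_Ici_self).min (tendsto_leftLim_nhdsGT hll hrc t))
    (min_le_right _ _) (min_le_left _ _)

theorem le_leftLim_of_le {m : ℝ → ℝ} (hmc : Continuous m) (hmf : ∀ t, m t ≤ f t)
    (t : ℝ) : m t ≤ fl t :=
  le_of_tendsto_of_tendsto' (hmc.continuousWithinAt.tendsto) (hll t) hmf

end Cadlag

theorem contact_set_isClosed_general (α : ℝ) (f fl m : ℝ → ℝ)
    (hrc : ∀ t : ℝ, ContinuousWithinAt f (Set.Ici t) t)
    (hll : ∀ t : ℝ, Filter.Tendsto f (nhdsWithin t (Set.Iio t)) (nhds (fl t)))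
    (hm : IsLipMinorant α f m) :
    IsClosed {t : ℝ | m t = min (f t) (fl t)} := by
  obtain ⟨hmLip, hmf, -⟩ := hm
  have hmc : Continuous m := hmLip.continuous
  have hmg : ∀ t, m t ≤ min (f t) (fl t) := fun t =>
    le_min (hmf t) (le_leftLim_of_le hll hmc hmf t)
  have hepi := (lowerSemicontinuous_min_leftLim hll hrc).isClosed_epigraph
  convert hepi.preimage (continuous_id.prodMk hmc) using 1
  ext t
  exact (hmg t).ge_iff_eq.symm

theorem contact_set_isClosed (α : ℝ) (hα : 0 < α) (f fl m : ℝ → ℝ)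
    (hrc : ∀ t : ℝ, ContinuousWithinAt f (Set.Ici t) t)
    (hll : ∀ t : ℝ, Filter.Tendsto f (nhdsWithin t (Set.Iio t)) (nhds (fl t)))
    (hm : IsLipMinorant α f m) :
    IsClosed {t : ℝ | m t = min (f t) (fl t)} :=
  contact_set_isClosed_general α f fl m hrc hll hm
end

section
/- Let α > 0 and let f : ℝ → ℝ be a càdlàg function with α-Lipschitz minorant m. Suppose t' < t'' satisfy f(t') ∧ f(t'⁻) = m(t'), f(t'') ∧ f(t''⁻) = m(t''), and f(t) ∧ f(t⁻) > m(t) for all t ∈ (t', t''). Set t* := (f(t'') ∧ f(t''⁻) - f(t') ∧ f(t'⁻) + α(t'' + t'))/(2α). Then m(t) = f(t') ∧ f(t'⁻) + α(t - t') for t' ≤ t ≤ t*, and m(t) = f(t'') ∧ f(t''⁻) + α(t'' - t) for t* ≤ t ≤ t''. -/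
/-!
Since `m` dominates every `α`-cone lying below `f`, `m t` is the infimum of `f s + α |t - s|`
over all `s`. For `t` between the contact points, the infimum over `s` outside `[t₁, t₂]` is
at least the sawtooth `min (m t₁ + α (t - t₁)) (m t₂ + α (t₂ - t))`. On `[t₁, t₂]` one may
replace `f` by the lower semicontinuous function `min f f(·⁻)`, so that
`s ↦ min (f s) (f (s⁻)) + α |t - s|` attains its minimum at some `c ∈ [t₁, t₂]`; at an interior
`c` this minimum exceeds `m t`, and at an endpoint it is at least the sawtooth. Hence `m` is at
least the sawtooth, and the Lipschitz bound gives the reverse inequality.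
-/

open Filter Set

open Topology

theorem lowerSemicontinuous_min_of_tendsto_nhdsLT {f fl : ℝ → ℝ}
    (hrc : ∀ t, ContinuousWithinAt f (Ici t) t) (hll : ∀ t, Tendsto f (𝓝[<] t) (𝓝 (fl t))) :
    LowerSemicontinuous fun t => min (f t) (fl t) := by
  have eventually_lt : ∀ c y, y < min (f c) (fl c) → ∀ᶠ s in 𝓝 c, y < f s := by
    intro c y hy
    rw [← nhdsLT_sup_nhdsGE, eventually_sup]
    exact ⟨(hll c).eventually (lt_mem_nhds (hy.trans_le (min_le_right _ _))),
      Tendsto.eventually (hrc c) (lt_mem_nhds (hy.trans_le (min_le_left _ _)))⟩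
  intro c y hy
  obtain ⟨y', hyy', hy'⟩ := exists_between hy
  filter_upwards [eventually_lt c y' hy', (eventually_lt c y' hy').eventually_nhds]
    with s hfs hnear
  have hfl : y' ≤ fl s :=
    ge_of_tendsto (hll s) ((hnear.filter_mono nhdsWithin_le_nhds).mono fun _ h => h.le)
  exact lt_min (hyy'.trans hfs) (hyy'.trans_le hfl)

theorem IsAlphaLipschitz.le_add_mul_abs {α : ℝ} {g : ℝ → ℝ} (hg : IsAlphaLipschitz α g)
    (s t : ℝ) : g t ≤ g s + α * |t - s| := by
  linarith [hg t s, le_abs_self (g t - g s)]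

theorem isAlphaLipschitz_cone {α : ℝ} (hα : 0 ≤ α) (b c : ℝ) :
    IsAlphaLipschitz α fun u => b - α * |u - c| := by
  intro s t
  calc |b - α * |s - c| - (b - α * |t - c|)| = α * |(|s - c| - |t - c|)| := by
        rw [show b - α * |s - c| - (b - α * |t - c|) = -(α * (|s - c| - |t - c|)) by ring,
          abs_neg, abs_mul, abs_of_nonneg hα]
    _ ≤ α * |s - t| :=
        mul_le_mul_of_nonneg_left (by simpa using abs_abs_sub_abs_le_abs_sub (s - c) (t - c)) hα

namespace IsLipMinorant

variable {α : ℝ} {f m : ℝ → ℝ}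

theorem le_add_mul_abs (hm : IsLipMinorant α f m) (s t : ℝ) : m t ≤ f s + α * |t - s| := by
  linarith [hm.1.le_add_mul_abs s t, hm.2.1 s]

theorem le_of_forall_le (hm : IsLipMinorant α f m) (hα : 0 ≤ α) {b t : ℝ}
    (h : ∀ s, b ≤ f s + α * |t - s|) : b ≤ m t := by
  have hcone : ∀ s, b - α * |s - t| ≤ f s := fun s => by
    rw [abs_sub_comm]
    linarith [h s]
  simpa using hm.2.2 _ (isAlphaLipschitz_cone hα b t) hcone t

theorem min_le_of_contact (hm : IsLipMinorant α f m) (hα : 0 ≤ α) {g : ℝ → ℝ}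
    (hg : LowerSemicontinuous g) (hgf : ∀ t, g t ≤ f t) {t₁ t₂ : ℝ}
    (h1 : g t₁ = m t₁) (h2 : g t₂ = m t₂) (h3 : ∀ t ∈ Ioo t₁ t₂, m t < g t)
    {t : ℝ} (ht : t ∈ Icc t₁ t₂) :
    min (m t₁ + α * (t - t₁)) (m t₂ + α * (t₂ - t)) ≤ m t := by
  set S := min (m t₁ + α * (t - t₁)) (m t₂ + α * (t₂ - t))
  have hS₁ : S ≤ m t₁ + α * (t - t₁) := min_le_left _ _
  have hS₂ : S ≤ m t₂ + α * (t₂ - t) := min_le_right _ _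
  have hφ : LowerSemicontinuous fun s => g s + α * |t - s| :=
    hg.add (continuous_const.mul (continuous_const.sub continuous_id).abs).lowerSemicontinuous
  obtain ⟨c, hc, hcmin⟩ :=
    (hφ.lowerSemicontinuousOn (Icc t₁ t₂)).exists_isMinOn ⟨t, ht⟩ isCompact_Icc
  have hbound : min S (g c + α * |t - c|) ≤ m t := by
    refine hm.le_of_forall_le hα fun s => ?_
    rcases le_or_gt s t₁ with hs | hs
    · have := hm.le_add_mul_abs s t₁
      rw [abs_of_nonneg (by linarith : 0 ≤ t₁ - s)] at this
      rw [abs_of_nonneg (by linarith [ht.1] : 0 ≤ t - s)]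
      linarith [min_le_left S (g c + α * |t - c|)]
    rcases le_or_gt t₂ s with hs' | hs'
    · have := hm.le_add_mul_abs s t₂
      rw [abs_of_nonpos (by linarith : t₂ - s ≤ 0)] at this
      rw [abs_of_nonpos (by linarith [ht.2] : t - s ≤ 0)]
      linarith [min_le_left S (g c + α * |t - c|)]
    · have : g c + α * |t - c| ≤ g s + α * |t - s| := hcmin ⟨hs.le, hs'.le⟩
      linarith [min_le_right S (g c + α * |t - c|), hgf s]
  rcases min_le_iff.1 hbound with h | hφc
  · exact h
  rcases hc.1.eq_or_lt with rfl | hc₁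
  · rw [h1, abs_of_nonneg (sub_nonneg.2 ht.1)] at hφc
    linarith
  rcases hc.2.eq_or_lt with rfl | hc₂
  · rw [h2, abs_of_nonpos (sub_nonpos.2 ht.2)] at hφc
    linarith
  · linarith [h3 c ⟨hc₁, hc₂⟩, hm.1.le_add_mul_abs c t]

theorem eq_min_of_contact (hm : IsLipMinorant α f m) (hα : 0 ≤ α) {g : ℝ → ℝ}
    (hg : LowerSemicontinuous g) (hgf : ∀ t, g t ≤ f t) {t₁ t₂ : ℝ}
    (h1 : g t₁ = m t₁) (h2 : g t₂ = m t₂) (h3 : ∀ t ∈ Ioo t₁ t₂, m t < g t)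
    {t : ℝ} (ht : t ∈ Icc t₁ t₂) :
    m t = min (m t₁ + α * (t - t₁)) (m t₂ + α * (t₂ - t)) := by
  refine le_antisymm (le_min ?_ ?_) (hm.min_le_of_contact hα hg hgf h1 h2 h3 ht)
  · simpa [abs_of_nonneg (sub_nonneg.2 ht.1)] using hm.1.le_add_mul_abs t₁ t
  · simpa [abs_of_nonpos (sub_nonpos.2 ht.2)] using hm.1.le_add_mul_abs t₂ t

end IsLipMinorant

theorem minorant_sawtooth (α : ℝ) (hα : 0 < α) (f fl m : ℝ → ℝ)
    (hrc : ∀ t : ℝ, ContinuousWithinAt f (Set.Ici t) t)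
    (hll : ∀ t : ℝ, Filter.Tendsto f (nhdsWithin t (Set.Iio t)) (nhds (fl t)))
    (hm : IsLipMinorant α f m)
    (t₁ t₂ : ℝ) (hlt : t₁ < t₂)
    (h1 : min (f t₁) (fl t₁) = m t₁)
    (h2 : min (f t₂) (fl t₂) = m t₂)
    (h3 : ∀ t, t₁ < t → t < t₂ → m t < min (f t) (fl t))
    (tstar : ℝ)
    (htstar : tstar = (min (f t₂) (fl t₂) - min (f t₁) (fl t₁) + α * (t₂ + t₁)) / (2 * α)) :
    (∀ t, t₁ ≤ t → t ≤ tstar → m t = min (f t₁) (fl t₁) + α * (t - t₁)) ∧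
    (∀ t, tstar ≤ t → t ≤ t₂ → m t = min (f t₂) (fl t₂) + α * (t₂ - t)) := by
  have sawtooth (t : ℝ) (ht : t ∈ Icc t₁ t₂) :=
    hm.eq_min_of_contact hα.le (lowerSemicontinuous_min_of_tendsto_nhdsLT hrc hll)
      (fun t => min_le_left _ _) h1 h2 (fun t ht => h3 t ht.1 ht.2) ht
  have lip₁₂ := hm.1.le_add_mul_abs t₁ t₂
  have lip₂₁ := hm.1.le_add_mul_abs t₂ t₁
  rw [abs_of_pos (sub_pos.2 hlt)] at lip₁₂
  rw [abs_of_neg (sub_neg.2 hlt)] at lip₂₁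
  have le_tstar_iff : ∀ t, t ≤ tstar ↔ m t₁ + α * (t - t₁) ≤ m t₂ + α * (t₂ - t) := fun t => by
    rw [htstar, h1, h2, le_div_iff₀ (by positivity)]
    constructor <;> intro h <;> linarith
  have tstar_le_iff : ∀ t, tstar ≤ t ↔ m t₂ + α * (t₂ - t) ≤ m t₁ + α * (t - t₁) := fun t => by
    rw [htstar, h1, h2, div_le_iff₀ (by positivity)]
    constructor <;> intro h <;> linarith
  rw [h1, h2]
  refine ⟨fun t ht₁ ht => ?_, fun t ht ht₂ => ?_⟩
  · have ht₂ : t ≤ t₂ := by nlinarith [(le_tstar_iff t).1 ht]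
    rw [sawtooth t ⟨ht₁, ht₂⟩, min_eq_left ((le_tstar_iff t).1 ht)]
  · have ht₁ : t₁ ≤ t := by nlinarith [(tstar_le_iff t).1 ht]
    rw [sawtooth t ⟨ht₁, ht₂⟩, min_eq_right ((tstar_le_iff t).1 ht)]
end

section
/- For every α > 0, ∫₀^∞ [ (4α³/√(2π)) κ^{1/2} e^{-α²κ/2} - 4α⁴ κ Φ(-α κ^{1/2}) ] dκ = 1, where Φ(z) = ∫_{-∞}^z (2π)^{-1/2} e^{-t²/2} dt is the standard normal cumulative distribution function. -/
/-!
Let `S x = 2 (x⁴ + 1) Φ(-x) - 2 (x³ - x) φ(x)` (`kSurvival`). Since `φ' = -x φ`, the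
integrand is the `κ`-derivative of `-S (α √κ)`.
Mills' inequality `x Φ(-x) ≤ φ(x)` makes the integrand nonnegative and forces `S x → 0`,
so the integral equals `S 0 = 2 Φ(0) = 1`.
-/

open MeasureTheory Set Filter Topology Real

noncomputable def stdNormalPDF (t : ℝ) : ℝ := (√(2 * π))⁻¹ * exp (-(t ^ 2 / 2))

noncomputable def stdNormalCDF (x : ℝ) : ℝ := ∫ t in Iio x, stdNormalPDF t

local notation "φ" => stdNormalPDF
local notation "Φ" => stdNormalCDF

lemma stdNormalPDF_nonneg (t : ℝ) : 0 ≤ φ t := by unfold stdNormalPDF; positivity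

lemma stdNormalPDF_neg (t : ℝ) : φ (-t) = φ t := by simp [stdNormalPDF]

lemma continuous_stdNormalPDF : Continuous φ := by unfold stdNormalPDF; fun_prop

lemma hasDerivAt_stdNormalPDF (x : ℝ) : HasDerivAt φ (-x * φ x) x := by
  have h : HasDerivAt (fun t : ℝ => -(t ^ 2 / 2)) (-x) x := by
    simpa using ((hasDerivAt_pow 2 x).div_const 2).fun_neg
  exact (h.exp.const_mul _).congr_deriv (by unfold stdNormalPDF; ring)

lemma integrable_stdNormalPDF : Integrable φ := by
  refine ((integrable_exp_neg_mul_sq (by norm_num : (0 : ℝ) < 1 / 2)).const_mul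
    (√(2 * π))⁻¹).congr (.of_forall fun t => ?_)
  simp only [stdNormalPDF]
  ring_nf

lemma integral_stdNormalPDF : ∫ t, φ t = 1 := by
  have h : ∫ t, φ t = (√(2 * π))⁻¹ * ∫ t, exp (-(1 / 2) * t ^ 2) := by
    rw [← integral_const_mul]
    congr 1 with t
    simp only [stdNormalPDF]
    ring_nf
  rw [h, integral_gaussian, show π / (1 / 2) = 2 * π by ring]
  exact inv_mul_cancel₀ (by positivity)


lemma tendsto_pow_mul_stdNormalPDF_atTop (n : ℕ) :
    Tendsto (fun x => x ^ n * φ x) atTop (𝓝 0) := by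
  have h := (rpow_mul_exp_neg_mul_sq_isLittleO_exp_neg (by norm_num : (0 : ℝ) < 1 / 2)
    n).tendsto_zero_of_tendsto
      (tendsto_exp_atBot.comp (tendsto_id.const_mul_atTop_of_neg (by norm_num)))
  rw [← mul_zero (√(2 * π))⁻¹]
  refine (h.const_mul _).congr fun x => ?_
  simp only [stdNormalPDF, rpow_natCast]
  ring_nf

lemma tendsto_stdNormalPDF_atBot : Tendsto φ atBot (𝓝 0) := by
  refine ((tendsto_pow_mul_stdNormalPDF_atTop 0).comp tendsto_neg_atBot_atTop).congr
    fun t => ?_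
  simp [stdNormalPDF_neg]

lemma integrable_neg_mul_stdNormalPDF : Integrable fun t => -t * φ t := by
  refine ((integrable_mul_exp_neg_mul_sq (by norm_num : (0 : ℝ) < 1 / 2)).const_mul
    (-(√(2 * π))⁻¹)).congr (.of_forall fun t => ?_)
  simp only [stdNormalPDF]
  ring_nf

lemma hasDerivAt_stdNormalCDF (x : ℝ) : HasDerivAt Φ (φ x) x := by
  have h : Φ = fun y => Φ 0 + ∫ t in (0 : ℝ)..y, φ t := by
    funext y
    have := intervalIntegral.integral_Iic_sub_Iic (a := 0) (b := y)
      integrable_stdNormalPDF.integrableOn integrable_stdNormalPDF.integrableOn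
    simp only [stdNormalCDF, ← integral_Iic_eq_integral_Iio]
    linarith
  rw [h]
  exact (intervalIntegral.integral_hasDerivAt_right integrable_stdNormalPDF.intervalIntegrable
    (continuous_stdNormalPDF.stronglyMeasurableAtFilter _ _)
    continuous_stdNormalPDF.continuousAt).const_add _

lemma stdNormalCDF_nonneg (x : ℝ) : 0 ≤ Φ x :=
  setIntegral_nonneg measurableSet_Iio fun t _ => stdNormalPDF_nonneg t

lemma stdNormalCDF_zero : Φ 0 = 1 / 2 := by
  have hsymm : ∫ t in Iic (0 : ℝ), φ t = ∫ t in Ioi (0 : ℝ), φ t := by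
    rw [← neg_zero, ← integral_comp_neg_Ioi]
    simp only [stdNormalPDF_neg, neg_zero]
  have htotal := intervalIntegral.integral_Iic_add_Ioi (b := (0 : ℝ))
    integrable_stdNormalPDF.integrableOn integrable_stdNormalPDF.integrableOn
  rw [integral_stdNormalPDF, hsymm] at htotal
  rw [stdNormalCDF, ← integral_Iic_eq_integral_Iio, hsymm]
  linarith

lemma integral_Iic_neg_mul_stdNormalPDF (a : ℝ) : ∫ t in Iic a, -t * φ t = φ a := by
  simpa using integral_Iic_of_hasDerivAt_of_tendsto' (fun t _ => hasDerivAt_stdNormalPDF t)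
    integrable_neg_mul_stdNormalPDF.integrableOn tendsto_stdNormalPDF_atBot

lemma mul_stdNormalCDF_neg_le (x : ℝ) : x * Φ (-x) ≤ φ x := by
  calc x * Φ (-x) = ∫ t in Iio (-x), x * φ t := (integral_const_mul _ _).symm
    _ ≤ ∫ t in Iio (-x), -t * φ t := by
      refine setIntegral_mono_on (integrable_stdNormalPDF.const_mul x).integrableOn
        integrable_neg_mul_stdNormalPDF.integrableOn measurableSet_Iio fun t ht => ?_
      exact mul_le_mul_of_nonneg_right (by linarith [ht.out]) (stdNormalPDF_nonneg t)
    _ = φ x := by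
      rw [← integral_Iic_eq_integral_Iio, integral_Iic_neg_mul_stdNormalPDF, stdNormalPDF_neg]

lemma stdNormalCDF_neg_le_of_one_le {x : ℝ} (hx : 1 ≤ x) : Φ (-x) ≤ φ x :=
  (le_mul_of_one_le_left (stdNormalCDF_nonneg _) hx).trans (mul_stdNormalCDF_neg_le x)

/-- At `x = α √κ` this is the tail `∫_κ^∞ kDensity α`. -/
noncomputable def kSurvival (x : ℝ) : ℝ := 2 * (x ^ 4 + 1) * Φ (-x) - 2 * (x ^ 3 - x) * φ x

lemma kSurvival_zero : kSurvival 0 = 1 := by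
  simp [kSurvival, stdNormalCDF_zero]

lemma hasDerivAt_kSurvival (x : ℝ) :
    HasDerivAt kSurvival (8 * x ^ 3 * Φ (-x) - 8 * x ^ 2 * φ x) x := by
  have hΦ : HasDerivAt (fun y => Φ (-y)) (-φ x) x := by
    have h := (hasDerivAt_stdNormalCDF (-x)).comp x (hasDerivAt_neg x)
    rwa [stdNormalPDF_neg, mul_neg_one] at h
  have hp : HasDerivAt (fun y : ℝ => 2 * (y ^ 4 + 1)) (8 * x ^ 3) x := by
    simpa using (((hasDerivAt_pow 4 x).add_const 1).const_mul 2).congr_deriv (by ring)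
  have hq : HasDerivAt (fun y : ℝ => 2 * (y ^ 3 - y)) (6 * x ^ 2 - 2) x := by
    simpa using
      (((hasDerivAt_pow 3 x).sub (hasDerivAt_id x)).const_mul 2).congr_deriv (by ring)
  refine ((hp.mul hΦ).sub (hq.mul (hasDerivAt_stdNormalPDF x))).congr_deriv ?_
  ring

lemma continuous_kSurvival : Continuous kSurvival :=
  continuous_iff_continuousAt.2 fun x => (hasDerivAt_kSurvival x).continuousAt

lemma tendsto_kSurvival_atTop : Tendsto kSurvival atTop (𝓝 0) := by
  have hpdf (n : ℕ) := tendsto_pow_mul_stdNormalPDF_atTop n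
  have hcdf : Tendsto (fun x => (x ^ 4 + 1) * Φ (-x)) atTop (𝓝 0) := by
    refine squeeze_zero' (.of_forall fun x => by positivity [stdNormalCDF_nonneg (-x)]) ?_
      (by simpa using (hpdf 4).add (hpdf 0))
    filter_upwards [eventually_ge_atTop 1] with x hx
    have := mul_le_mul_of_nonneg_left (stdNormalCDF_neg_le_of_one_le hx)
      (by positivity : 0 ≤ x ^ 4 + 1)
    linarith
  have := (hcdf.const_mul 2).sub (((hpdf 3).sub (hpdf 1)).const_mul 2)
  simp only [mul_zero, sub_zero] at this
  exact this.congr fun x => by simp only [kSurvival]; ring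

noncomputable def kDensity (α κ : ℝ) : ℝ :=
  4 * α ^ 3 * √κ * φ (α * √κ) - 4 * α ^ 4 * κ * Φ (-(α * √κ))

lemma kDensity_nonneg {α κ : ℝ} (hα : 0 ≤ α) (hκ : 0 ≤ κ) : 0 ≤ kDensity α κ := by
  have h : kDensity α κ =
      4 * α ^ 3 * √κ * (φ (α * √κ) - α * √κ * Φ (-(α * √κ))) := by
    rw [kDensity]
    linear_combination 4 * α ^ 4 * Φ (-(α * √κ)) * sq_sqrt hκ
  rw [h]
  exact mul_nonneg (by positivity) (sub_nonneg.2 (mul_stdNormalCDF_neg_le _))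

lemma hasDerivAt_neg_kSurvival_mul_sqrt (α : ℝ) {κ : ℝ} (hκ : 0 < κ) :
    HasDerivAt (fun κ => -kSurvival (α * √κ)) (kDensity α κ) κ := by
  refine ((hasDerivAt_kSurvival _).comp κ
    ((hasDerivAt_sqrt hκ.ne').const_mul α)).neg.congr_deriv ?_
  rw [kDensity]
  field_simp
  linear_combination -8 * α ^ 4 * Φ (-(α * √κ)) * sq_sqrt hκ.le

lemma kDensity_eq {α κ : ℝ} (hκ : 0 ≤ κ) :
    kDensity α κ = 4 * α ^ 3 / √(2 * π) * √κ * exp (-(α ^ 2 * κ / 2))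
      - 4 * α ^ 4 * κ *
        ∫ t in Iio (-(α * √κ)), (√(2 * π))⁻¹ * exp (-(t ^ 2 / 2)) := by
  simp only [kDensity, stdNormalCDF, stdNormalPDF, mul_pow, sq_sqrt hκ]
  ring

theorem K_density_integrates_to_one (α : ℝ) (hα : 0 < α) :
    ∫ κ in Set.Ioi (0 : ℝ),
      (4 * α ^ 3 / Real.sqrt (2 * Real.pi)) * Real.sqrt κ * Real.exp (-(α ^ 2 * κ / 2))
        - 4 * α ^ 4 * κ *
          (∫ t in Set.Iio (-(α * Real.sqrt κ)),
            (Real.sqrt (2 * Real.pi))⁻¹ * Real.exp (-(t ^ 2 / 2))) = 1 := by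
  have hlim : Tendsto (fun κ => -kSurvival (α * √κ)) atTop (𝓝 0) := by
    simpa using (tendsto_kSurvival_atTop.comp (tendsto_sqrt_atTop.const_mul_atTop hα)).neg
  calc _ = ∫ κ in Ioi (0 : ℝ), kDensity α κ :=
        setIntegral_congr_fun measurableSet_Ioi fun κ hκ => (kDensity_eq hκ.out.le).symm
    _ = 0 - -kSurvival (α * √0) :=
        integral_Ioi_of_hasDerivAt_of_nonneg
          (continuous_kSurvival.comp
            (continuous_const.mul continuous_sqrt)).neg.continuousWithinAt
          (fun κ hκ => hasDerivAt_neg_kSurvival_mul_sqrt α hκ)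
          (fun κ hκ => kDensity_nonneg hα.le hκ.out.le) hlim
    _ = 1 := by simp [kSurvival_zero]
end

section
/- For any c > 0, ∫₀^{1/2} ξ^{-3/2}(1-ξ)^{-3/2} exp(-c/(ξ(1-ξ))) dξ = e^{-4c} √π / √c. -/
open MeasureTheory Set

/-!
Substitute `y = 1 / (ξ (1 - ξ)) - 4 = (1 - 2ξ)² / (ξ (1 - ξ))`, which maps `(0, 1/2)` bijectively
onto `(0, ∞)`. Its Jacobian `(1 - 2ξ) / (ξ (1 - ξ))²` times `y ^ (-1/2)` is
`(ξ (1 - ξ)) ^ (-3/2)`, and `exp (-c y) = e^{4c} exp (-c / (ξ (1 - ξ)))`, so the integral is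
`e^{-4c} ∫₀^∞ y ^ (-1/2) e^{-c y} dy = e^{-4c} Γ(1/2) / √c`.
-/

noncomputable def xiSubst (ξ : ℝ) : ℝ := (ξ * (1 - ξ))⁻¹ - 4

lemma xiSubst_eq_sq_div {ξ : ℝ} (hξ : ξ * (1 - ξ) ≠ 0) :
    xiSubst ξ = (1 - 2 * ξ) ^ 2 / (ξ * (1 - ξ)) := by
  rw [xiSubst, eq_div_iff hξ, sub_mul, inv_mul_cancel₀ hξ]
  ring

lemma hasDerivAt_xiSubst {ξ : ℝ} (hξ : ξ * (1 - ξ) ≠ 0) :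
    HasDerivAt xiSubst (-(1 - 2 * ξ) / (ξ * (1 - ξ)) ^ 2) ξ := by
  have hpoly : HasDerivAt (fun x : ℝ => x * (1 - x)) (1 - 2 * ξ) ξ :=
    ((hasDerivAt_id' ξ).mul ((hasDerivAt_id' ξ).const_sub 1)).congr_deriv (by ring)
  exact (hpoly.inv hξ).sub_const 4

lemma xiSubst_injOn : InjOn xiSubst (Iic (1 / 2)) := by
  intro a ha b hb hab
  have h : a * (1 - a) = b * (1 - b) := inv_injective (sub_left_inj.mp hab)
  rw [mem_Iic] at ha hb
  nlinarith [sq_nonneg (a - b)]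

lemma image_xiSubst_Ioo : xiSubst '' Ioo 0 (1 / 2) = Ioi 0 := by
  apply Subset.antisymm
  · rintro _ ⟨ξ, ⟨h0, h1⟩, rfl⟩
    rw [mem_Ioi, xiSubst_eq_sq_div (by nlinarith)]
    exact div_pos (by nlinarith) (by nlinarith)
  · intro y (hy : 0 < y)
    have hy4 : 0 < y + 4 := by linarith
    set s := Real.sqrt (y / (y + 4))
    have hs0 : 0 < s := Real.sqrt_pos.mpr (by positivity)
    have hs_sq : s ^ 2 = y / (y + 4) := Real.sq_sqrt (by positivity)
    have hs1 : s < 1 := by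
      rw [← Real.sqrt_one]
      exact Real.sqrt_lt_sqrt (by positivity) ((div_lt_one hy4).mpr (by linarith))
    -- the smaller root of `ξ (1 - ξ) = 1 / (y + 4)`
    refine ⟨(1 - s) / 2, ⟨by linarith, by linarith⟩, ?_⟩
    have ht : (1 - s) / 2 * (1 - (1 - s) / 2) = (y + 4)⁻¹ := by
      rw [show (1 - s) / 2 * (1 - (1 - s) / 2) = (1 - s ^ 2) / 4 by ring, hs_sq]
      field_simp
      ring
    rw [xiSubst, ht, inv_inv]
    ring

lemma div_sq_mul_xiSubst_rpow {ξ : ℝ} (h0 : 0 < ξ) (h1 : ξ < 1 / 2) :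
    (1 - 2 * ξ) / (ξ * (1 - ξ)) ^ 2 * xiSubst ξ ^ (-(1 : ℝ) / 2)
      = ξ ^ (-(3 : ℝ) / 2) * (1 - ξ) ^ (-(3 : ℝ) / 2) := by
  have ht : 0 < ξ * (1 - ξ) := by nlinarith
  have hd : 0 < 1 - 2 * ξ := by linarith
  rw [← Real.mul_rpow h0.le (by linarith), xiSubst_eq_sq_div ht.ne',
    show -(1 : ℝ) / 2 = -(1 / 2) by norm_num, Real.rpow_neg (by positivity), ← Real.sqrt_eq_rpow,
    Real.sqrt_div' _ ht.le, Real.sqrt_sq hd.le, show -(3 : ℝ) / 2 = 1 / 2 - 2 by norm_num,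
    Real.rpow_sub ht, Real.rpow_two, ← Real.sqrt_eq_rpow]
  field_simp

lemma exp_neg_mul_xiSubst (c ξ : ℝ) :
    Real.exp (-(c * xiSubst ξ)) = Real.exp (4 * c) * Real.exp (-(c / (ξ * (1 - ξ)))) := by
  rw [← Real.exp_add, xiSubst]
  ring_nf

lemma integral_rpow_neg_half_mul_exp_neg_mul {c : ℝ} (hc : 0 < c) :
    ∫ y in Ioi 0, y ^ (-(1 : ℝ) / 2) * Real.exp (-(c * y)) = Real.sqrt Real.pi / Real.sqrt c := by
  rw [show -(1 : ℝ) / 2 = 1 / 2 - 1 by norm_num,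
    Real.integral_rpow_mul_exp_neg_mul_Ioi one_half_pos hc, Real.Gamma_one_half_eq,
    one_div c, Real.inv_rpow hc.le, ← Real.sqrt_eq_rpow, div_eq_inv_mul]

theorem integral_xi_identity (c : ℝ) (hc : 0 < c) :
    ∫ ξ in Set.Ioo (0 : ℝ) (1 / 2),
        ξ ^ (-(3 : ℝ) / 2) * (1 - ξ) ^ (-(3 : ℝ) / 2) * Real.exp (-(c / (ξ * (1 - ξ))))
      = Real.exp (-(4 * c)) * Real.sqrt Real.pi / Real.sqrt c := by
  have hpos : ∀ ξ ∈ Ioo (0 : ℝ) (1 / 2), ξ * (1 - ξ) ≠ 0 := fun ξ ⟨h0, h1⟩ => by nlinarith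
  have hcov := integral_image_eq_integral_abs_deriv_smul measurableSet_Ioo
    (fun ξ hξ => (hasDerivAt_xiSubst (hpos ξ hξ)).hasDerivWithinAt)
    (xiSubst_injOn.mono fun _ h => h.2.le) (fun y => y ^ (-(1 : ℝ) / 2) * Real.exp (-(c * y)))
  have hpt : EqOn (fun ξ => |-(1 - 2 * ξ) / (ξ * (1 - ξ)) ^ 2| •
        (xiSubst ξ ^ (-(1 : ℝ) / 2) * Real.exp (-(c * xiSubst ξ))))
      (fun ξ => Real.exp (4 * c) *
        (ξ ^ (-(3 : ℝ) / 2) * (1 - ξ) ^ (-(3 : ℝ) / 2) * Real.exp (-(c / (ξ * (1 - ξ))))))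
      (Ioo 0 (1 / 2)) := by
    rintro ξ ⟨h0, h1⟩
    dsimp only
    have hjac : 0 < (1 - 2 * ξ) / (ξ * (1 - ξ)) ^ 2 :=
      div_pos (by linarith) (pow_pos (by nlinarith) 2)
    rw [smul_eq_mul, neg_div, abs_neg, abs_of_pos hjac, exp_neg_mul_xiSubst,
      ← div_sq_mul_xiSubst_rpow h0 h1]
    ring
  rw [image_xiSubst_Ioo, integral_rpow_neg_half_mul_exp_neg_mul hc,
    setIntegral_congr_fun measurableSet_Ioo hpt, integral_const_mul] at hcov
  rw [mul_div_assoc, hcov, Real.exp_neg, inv_mul_cancel_left₀ (Real.exp_ne_zero _)]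
end
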